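/- For the path P_n with vertices 0,...,n, the cover cost cc_r(P_n) equals (n+1)(2n+1)/6 + r(n-r)/n. -/

import Mathlib

open Finset

variable {V : Type*} [Fintype V] [DecidableEq V]

/-- One-step transition probability of simple random walk on `G`:
from `x`, move to a uniformly random neighbour. -/
noncomputable def SimpleGraph.step (G : SimpleGraph V) [DecidableRel G.Adj] (x y : V) : ℝ :=
  if G.Adj x y then ((G.degree x : ℝ))⁻¹ else 0

/-- `G.firstHitProb t r x`: probability that the first visit to `x` of simple random walk
started at `r` occurs at time `t` (time `0` counts as a visit). -/
noncomputable def SimpleGraph.firstHitProb (G : SimpleGraph V) [DecidableRel G.Adj] :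
    ℕ → V → V → ℝ
  | 0, r, x => if r = x then 1 else 0
  | (t+1), r, x => if r = x then 0 else ∑ z, G.step r z * G.firstHitProb t z x

/-- `G.hitTime r x`: expected hitting time `H_r(x)` of `x` for simple random walk from `r`. -/
noncomputable def SimpleGraph.hitTime (G : SimpleGraph V) [DecidableRel G.Adj] (r x : V) : ℝ :=
  ∑' t : ℕ, (t : ℝ) * G.firstHitProb t r x

/-- `G.firstInProb t r x y`: probability that the first visit of the walk from `r`
to the set `{x, y}` occurs at time `t` and is a visit to `x` (time `0` counts). -/
noncomputable def SimpleGraph.firstInProb (G : SimpleGraph V) [DecidableRel G.Adj] :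
    ℕ → V → V → V → ℝ
  | 0, r, x, _ => if r = x then 1 else 0
  | (t+1), r, x, y => if r = x ∨ r = y then 0 else ∑ z, G.step r z * G.firstInProb t z x y

/-- `G.probBefore r x y` = `p_r(x<y)`: probability that random walk from `r` visits `x`
strictly before `y` (visiting `x` at time `0` counts, so `p_r(r<y) = 1`). -/
noncomputable def SimpleGraph.probBefore (G : SimpleGraph V) [DecidableRel G.Adj]
    (r x y : V) : ℝ :=
  ∑' t : ℕ, G.firstInProb t r x y

/-- `G.escProb x y` = `p_{xy}`: probability that random walk from `x` visits `y` before
returning to `x` (i.e. before visiting `x` again at a positive time). -/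
noncomputable def SimpleGraph.escProb (G : SimpleGraph V) [DecidableRel G.Adj] (x y : V) : ℝ :=
  ∑ z, G.step x z * G.probBefore z y x

/-- `G.avoidProb y t z x`: probability that the walk started at `z` is at `x` at time `t`
and has not visited `y` at any time `≤ t`. -/
noncomputable def SimpleGraph.avoidProb (G : SimpleGraph V) [DecidableRel G.Adj] (y : V) :
    ℕ → V → V → ℝ
  | 0, z, x => if z = y then 0 else if z = x then 1 else 0
  | (t+1), z, x => if z = y then 0 else ∑ w, G.step z w * G.avoidProb y t w x

/-- `G.visitsBefore x y` = `V_x^{†y}`: expected number of visits to `x` (counting time `0`)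
of the walk started at `x` strictly before the first visit to `y`. -/
noncomputable def SimpleGraph.visitsBefore (G : SimpleGraph V) [DecidableRel G.Adj]
    (x y : V) : ℝ :=
  ∑' t : ℕ, G.avoidProb y t x x

/-- `G.coverDist r t (v, S)`: probability that the walk started at `r` is at `v` at time `t`
with `S` being the set of vertices visited so far. -/
noncomputable def SimpleGraph.coverDist (G : SimpleGraph V) [DecidableRel G.Adj] (r : V) :
    ℕ → V × Finset V → ℝ
  | 0, p => if p = (r, {r}) then 1 else 0
  | (t+1), p => ∑ q : V × Finset V,
      (if p.2 = insert p.1 q.2 then G.step q.1 p.1 else 0) * G.coverDist r t q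

/-- `G.coverTime r` = `CT_r(G)`: the expected number of steps of a cover tour of the walk
started at `r` (the walk stops once all vertices have been visited). -/
noncomputable def SimpleGraph.coverTime (G : SimpleGraph V) [DecidableRel G.Adj] (r : V) : ℝ :=
  ∑' t : ℕ, ∑ p : V × Finset V, if p.2 ≠ Finset.univ then G.coverDist r t p else 0

/-- `G.coverCost r` = `cc_r(G)`: the expected total cost of a cover tour from `r`, where a
step taken when `k` vertices other than `r` have been visited so far costs `1 - k / n`,
with `n = |V| - 1`. -/
noncomputable def SimpleGraph.coverCost (G : SimpleGraph V) [DecidableRel G.Adj] (r : V) : ℝ :=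
  ∑' t : ℕ, ∑ p : V × Finset V,
    if p.2 ≠ Finset.univ then
      G.coverDist r t p * (1 - ((p.2.erase r).card : ℝ) / ((Fintype.card V : ℝ) - 1))
    else 0

/-- `G.chargeD r x` = `D(x)`: the expected total charge departing from `x`, for the particle
started at `r` with charge `1` whose charge drops by `1/n` at each first visit to a vertex
other than `r` (it stops when the charge reaches `0`, i.e. when all vertices are covered). -/
noncomputable def SimpleGraph.chargeD (G : SimpleGraph V) [DecidableRel G.Adj] (r x : V) : ℝ :=
  ∑' t : ℕ, ∑ S : Finset V,
    if S ≠ Finset.univ then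
      G.coverDist r t (x, S) * (1 - ((S.erase r).card : ℝ) / ((Fintype.card V : ℝ) - 1))
    else 0

/-- The path graph on vertices `0, 1, …, n`, consecutive integers being adjacent. -/
def pathG (n : ℕ) : SimpleGraph (Fin (n+1)) where
  Adj i j := (i : ℕ) + 1 = j ∨ (j : ℕ) + 1 = i
  symm := ⟨fun i j h => h.symm⟩
  loopless := ⟨fun i h => by rcases h with h | h <;> omega⟩

instance (n : ℕ) : DecidableRel (pathG n).Adj :=
  fun i j => inferInstanceAs (Decidable ((i : ℕ) + 1 = j ∨ (j : ℕ) + 1 = i))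

/-- The star graph with center `0` and `n` leaves `1, …, n`. -/
def starG (n : ℕ) : SimpleGraph (Fin (n+1)) where
  Adj i j := i ≠ j ∧ (i = 0 ∨ j = 0)
  symm := ⟨fun i j h => ⟨h.1.symm, h.2.symm⟩⟩
  loopless := ⟨fun i h => h.1 rfl⟩

instance (n : ℕ) : DecidableRel (starG n).Adj :=
  fun i j => inferInstanceAs (Decidable (i ≠ j ∧ (i = 0 ∨ j = 0)))

/-!
A step of the cover tour taken at time `t + 1` costs `1/n` times the number of vertices not yet
visited at time `t`, so by linearity the cover cost is `(1/n) ∑ₓ ∑ₜ P(T_x > t) = (1/n) ∑ₓ H_r(x)`.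
On the path, `z ↦ H_z(x)` is the unique solution of `h(x) = 0`, `h(z) = 1 + (mean of h over the
neighbours of z)`; uniqueness, and the convergence of the tail sums, come from the walk reaching
`x` within `n` steps with probability at least `2⁻ⁿ` from anywhere. The solution is `x² - z²` for
`z ≤ x` and `(n - x)² - (n - z)²` for `z ≥ x`, and summing it over `x` gives the formula.
-/

lemma one_sub_card_erase_div_eq_card_compl_div {r : V} {S : Finset V} (hr : r ∈ S)
    (hS : S ≠ univ) :
    1 - ((S.erase r).card : ℝ) / ((Fintype.card V : ℝ) - 1) =
      (Sᶜ.card : ℝ) / ((Fintype.card V : ℝ) - 1) := by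
  have hlt : S.card < Fintype.card V := card_lt_card (ssubset_univ_iff.mpr hS)
  have hpos : 0 < S.card := card_pos.mpr ⟨r, hr⟩
  have hN : ((Fintype.card V : ℝ) - 1) ≠ 0 := by
    have : (2 : ℝ) ≤ Fintype.card V := by exact_mod_cast (by omega : 2 ≤ Fintype.card V)
    linarith
  rw [card_erase_of_mem hr, card_compl, Nat.cast_sub hpos, Nat.cast_sub hlt.le]
  field_simp
  ring

namespace SimpleGraph

variable (G : SimpleGraph V) [DecidableRel G.Adj]

omit [DecidableEq V] in
lemma step_nonneg (x y : V) : 0 ≤ G.step x y := by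
  unfold step; split <;> positivity

omit [DecidableEq V] in
lemma sum_step_le_one (x : V) : ∑ y, G.step x y ≤ 1 := by
  unfold step
  rw [← sum_filter, ← neighborFinset_eq_filter, sum_const, card_neighborFinset_eq_degree,
    nsmul_eq_mul]
  exact mul_inv_le_one

omit [DecidableEq V] in
lemma sum_step_mul (z : V) (f : V → ℝ) :
    ∑ w, G.step z w * f w = (G.degree z : ℝ)⁻¹ * ∑ w ∈ G.neighborFinset z, f w := by
  rw [mul_sum, neighborFinset_eq_filter, sum_filter]
  refine sum_congr rfl fun w _ => ?_
  unfold step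
  split_ifs <;> simp

lemma avoidProb_nonneg (x : V) (t : ℕ) (z w : V) : 0 ≤ G.avoidProb x t z w := by
  induction t generalizing z with
  | zero => unfold avoidProb; split_ifs <;> norm_num
  | succ t ih =>
    unfold avoidProb
    split_ifs
    · rfl
    · exact sum_nonneg fun u _ => mul_nonneg (G.step_nonneg z u) (ih u)

lemma avoidProb_self_left (x : V) (t : ℕ) (w : V) : G.avoidProb x t x w = 0 := by
  cases t <;> simp [avoidProb]

lemma avoidProb_self_right (x : V) (t : ℕ) (z : V) : G.avoidProb x t z x = 0 := by
  induction t generalizing z with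
  | zero => simp [avoidProb]
  | succ t ih => simp [avoidProb, ih]

lemma avoidProb_succ' (x : V) (t : ℕ) (z w : V) :
    G.avoidProb x (t + 1) z w =
      if w = x then 0 else ∑ v, G.avoidProb x t z v * G.step v w := by
  split_ifs with hw
  · rw [hw, avoidProb_self_right]
  induction t generalizing z with
  | zero =>
    by_cases hz : z = x
    · simp [avoidProb, hz]
    · simp only [avoidProb, if_neg hz, mul_ite, mul_one, mul_zero, ite_mul, zero_mul,
        one_mul]
      rw [Fintype.sum_eq_single w fun u hu => by simp [hu]]
      simp [hw]
  | succ t ih =>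
    by_cases hz : z = x
    · simp [hz, avoidProb_self_left]
    rw [avoidProb, if_neg hz]
    simp_rw [ih, mul_sum, avoidProb, if_neg hz, sum_mul, mul_assoc]
    exact sum_comm

/-- `P(T_x > t)` for the walk started at `z`, with `T_x` its first visit to `x`. -/
noncomputable def notHitProb (x : V) (t : ℕ) (z : V) : ℝ := ∑ w, G.avoidProb x t z w

lemma notHitProb_zero (x z : V) : G.notHitProb x 0 z = if z = x then 0 else 1 := by
  by_cases h : z = x <;> simp [notHitProb, avoidProb, h]

lemma notHitProb_succ (x : V) (t : ℕ) (z : V) :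
    G.notHitProb x (t + 1) z = if z = x then 0 else ∑ w, G.step z w * G.notHitProb x t w := by
  unfold notHitProb
  by_cases h : z = x
  · simp [h, avoidProb_self_left]
  · simp only [avoidProb, if_neg h, mul_sum]
    exact sum_comm

lemma notHitProb_self (x : V) (t : ℕ) : G.notHitProb x t x = 0 := by
  simp [notHitProb, avoidProb_self_left]

lemma notHitProb_nonneg (x : V) (t : ℕ) (z : V) : 0 ≤ G.notHitProb x t z :=
  sum_nonneg fun w _ => G.avoidProb_nonneg x t z w

lemma notHitProb_le_one (x : V) (t : ℕ) (z : V) : G.notHitProb x t z ≤ 1 := by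
  induction t generalizing z with
  | zero => rw [notHitProb_zero]; split_ifs <;> norm_num
  | succ t ih =>
    rw [notHitProb_succ]
    split_ifs
    · norm_num
    · calc ∑ w, G.step z w * G.notHitProb x t w ≤ ∑ w, G.step z w :=
            sum_le_sum fun w _ => mul_le_of_le_one_right (G.step_nonneg z w) (ih w)
        _ ≤ 1 := G.sum_step_le_one z

lemma antitone_notHitProb (x z : V) : Antitone fun t => G.notHitProb x t z := by
  refine antitone_nat_of_succ_le fun t => ?_
  induction t generalizing z with
  | zero =>
    rw [notHitProb_zero]
    split_ifs with h
    · rw [h, notHitProb_self]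
    · exact G.notHitProb_le_one x 1 z
  | succ t ih =>
    rw [notHitProb_succ, notHitProb_succ]
    split_ifs
    · rfl
    · exact sum_le_sum fun w _ => mul_le_mul_of_nonneg_left (ih w) (G.step_nonneg z w)

/-- Markov property at time `t`. -/
lemma notHitProb_add (x : V) (t s : ℕ) (z : V) :
    G.notHitProb x (t + s) z = ∑ v, G.avoidProb x t z v * G.notHitProb x s v := by
  induction t generalizing z with
  | zero =>
    by_cases h : z = x
    · simp [h, notHitProb_self, avoidProb_self_left]
    · simp [avoidProb, h]
  | succ t ih =>
    by_cases h : z = x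
    · simp [h, notHitProb_self, avoidProb_self_left]
    rw [Nat.add_right_comm, notHitProb_succ, if_neg h]
    simp_rw [ih, mul_sum, avoidProb, if_neg h, sum_mul, mul_assoc]
    exact sum_comm

lemma notHitProb_mul_le_pow {x : V} {m : ℕ} {ρ : ℝ} (hA : ∀ z, G.notHitProb x m z ≤ ρ)
    (q : ℕ) (z : V) : G.notHitProb x (q * m) z ≤ ρ ^ q := by
  have hρ : 0 ≤ ρ := (G.notHitProb_nonneg x m x).trans (hA x)
  induction q generalizing z with
  | zero => simpa using G.notHitProb_le_one x 0 z
  | succ q ih =>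
    calc G.notHitProb x ((q + 1) * m) z
        = ∑ v, G.avoidProb x (q * m) z v * G.notHitProb x m v := by
          rw [Nat.succ_mul, notHitProb_add]
      _ ≤ ∑ v, G.avoidProb x (q * m) z v * ρ :=
          sum_le_sum fun v _ => mul_le_mul_of_nonneg_left (hA v) (G.avoidProb_nonneg x _ z v)
      _ = G.notHitProb x (q * m) z * ρ := by rw [← sum_mul, notHitProb]
      _ ≤ ρ ^ (q + 1) := by rw [pow_succ]; exact mul_le_mul_of_nonneg_right (ih z) hρ

-- `P(T_x > t) ≤ ρ ^ ⌊t / m⌋`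
lemma summable_notHitProb {x : V} {m : ℕ} {ρ : ℝ} (hm : m ≠ 0) (hρ : ρ < 1)
    (hA : ∀ z, G.notHitProb x m z ≤ ρ) (z : V) : Summable fun t => G.notHitProb x t z := by
  have : NeZero m := ⟨hm⟩
  have hρ0 : 0 ≤ ρ := (G.notHitProb_nonneg x m x).trans (hA x)
  have hprod : Summable fun p : ℕ × Fin m => ρ ^ p.1 * 1 :=
    (summable_geometric_of_lt_one hρ0 hρ).mul_of_nonneg (hasSum_fintype fun _ => 1).summable
      (fun _ => by positivity) fun _ => zero_le_one
  have hgeom : Summable fun t => ρ ^ (t / m) := by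
    simpa [Function.comp_def, Nat.divModEquiv] using (Nat.divModEquiv m).summable_iff.mpr hprod
  refine hgeom.of_nonneg_of_le (G.notHitProb_nonneg x · z) fun t => ?_
  calc G.notHitProb x t z ≤ G.notHitProb x (t / m * m) z :=
        G.antitone_notHitProb x z (Nat.div_mul_le_self t m)
    _ ≤ ρ ^ (t / m) := G.notHitProb_mul_le_pow hA _ z

lemma notHitProb_succ_le {x z w : V} {k : ℕ} {δ η : ℝ} (hδ : δ ≤ G.step z w)
    (hη0 : 0 ≤ η) (hη : G.notHitProb x k w ≤ 1 - η) :
    G.notHitProb x (k + 1) z ≤ 1 - δ * η := by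
  rw [notHitProb_succ]
  have hδη : δ * η ≤ G.step z w * (1 - G.notHitProb x k w) :=
    (mul_le_mul_of_nonneg_right hδ hη0).trans
      (mul_le_mul_of_nonneg_left (by linarith) (G.step_nonneg z w))
  split_ifs
  · have hstep : G.step z w ≤ 1 := (single_le_sum (fun u _ => G.step_nonneg z u)
      (mem_univ w)).trans (G.sum_step_le_one z)
    nlinarith [G.notHitProb_nonneg x k w, G.step_nonneg z w]
  have hloss : G.step z w * (1 - G.notHitProb x k w) ≤
      ∑ u, G.step z u * (1 - G.notHitProb x k u) :=
    single_le_sum (f := fun u => G.step z u * (1 - G.notHitProb x k u))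
      (fun u _ => mul_nonneg (G.step_nonneg z u) (by linarith [G.notHitProb_le_one x k u]))
      (mem_univ w)
  have hsplit : ∑ u, G.step z u * G.notHitProb x k u =
      ∑ u, G.step z u - ∑ u, G.step z u * (1 - G.notHitProb x k u) := by
    rw [← sum_sub_distrib]; congr 1; ext u; ring
  linarith [G.sum_step_le_one z]

/-- The expected hitting time of `x` from `z`, in the tail-sum form `E[T] = ∑ₜ P(T > t)`. -/
noncomputable def meanHitTime (x z : V) : ℝ := ∑' t, G.notHitProb x t z

lemma meanHitTime_self (x : V) : G.meanHitTime x x = 0 := by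
  simp [meanHitTime, notHitProb_self]

variable {G}

lemma meanHitTime_eq_one_add {x : V} (hs : ∀ w, Summable fun t => G.notHitProb x t w)
    {z : V} (hz : z ≠ x) : G.meanHitTime x z = 1 + ∑ w, G.step z w * G.meanHitTime x w := by
  unfold meanHitTime
  rw [(hs z).tsum_eq_zero_add, notHitProb_zero, if_neg hz]
  congr 1
  calc ∑' t, G.notHitProb x (t + 1) z = ∑' t, ∑ w, G.step z w * G.notHitProb x t w :=
        tsum_congr fun t => by rw [notHitProb_succ, if_neg hz]
    _ = ∑ w, ∑' t, G.step z w * G.notHitProb x t w :=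
        Summable.tsum_finsetSum fun w _ => (hs w).mul_left _
    _ = ∑ w, G.step z w * ∑' t, G.notHitProb x t w := by simp_rw [tsum_mul_left]

lemma sum_avoidProb_mul_eq {x : V} {d : V → ℝ} (hdx : d x = 0)
    (hd : ∀ z, z ≠ x → d z = ∑ w, G.step z w * d w) (t : ℕ) (z : V) :
    ∑ w, G.avoidProb x t z w * d w = d z := by
  by_cases hz : z = x
  · simp [hz, hdx, avoidProb_self_left]
  induction t generalizing z with
  | zero => simp [avoidProb, hz]
  | succ t ih =>
    rw [hd z hz]
    simp only [avoidProb, if_neg hz, sum_mul, mul_assoc]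
    rw [sum_comm]
    refine sum_congr rfl fun u _ => ?_
    by_cases hu : u = x
    · simp [hu, hdx, avoidProb_self_left]
    · rw [← mul_sum, ih u hu]

lemma meanHitTime_unique {x : V} (hs : ∀ w, Summable fun t => G.notHitProb x t w)
    {f : V → ℝ} (hfx : f x = 0) (hf : ∀ z, z ≠ x → f z = 1 + ∑ w, G.step z w * f w) :
    G.meanHitTime x = f := by
  set d := G.meanHitTime x - f
  have hdx : d x = 0 := by simp [d, meanHitTime_self, hfx]
  have hd : ∀ z, z ≠ x → d z = ∑ w, G.step z w * d w := fun z hz => by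
    simp only [d, Pi.sub_apply, mul_sub, sum_sub_distrib]
    rw [meanHitTime_eq_one_add hs hz, hf z hz]
    ring
  funext z
  rw [← sub_eq_zero]
  set M := ∑ w, |d w|
  have hbound : ∀ t, |d z| ≤ G.notHitProb x t z * M := fun t => by
    rw [← sum_avoidProb_mul_eq hdx hd t z, notHitProb, sum_mul]
    refine (abs_sum_le_sum_abs _ _).trans (sum_le_sum fun w _ => ?_)
    rw [abs_mul, abs_of_nonneg (G.avoidProb_nonneg x t z w)]
    exact mul_le_mul_of_nonneg_left (single_le_sum (fun u _ => abs_nonneg (d u)) (mem_univ w))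
      (G.avoidProb_nonneg x t z w)
  have hlim : Filter.Tendsto (fun t => G.notHitProb x t z * M) Filter.atTop (nhds 0) := by
    simpa using (hs z).tendsto_atTop_zero.mul_const M
  exact abs_nonpos_iff.mp (ge_of_tendsto' hlim hbound)

lemma sum_coverDist_of_notMem (r x : V) (t : ℕ) (w : V) :
    (∑ S : Finset V, if x ∈ S then 0 else G.coverDist r t (w, S)) = G.avoidProb x t r w := by
  induction t generalizing w with
  | zero =>
    rw [sum_eq_single {r} fun S _ hS => by simp [coverDist, hS]]
    · by_cases hx : r = x <;> by_cases hw : r = w <;> simp [coverDist, avoidProb, hx, hw, eq_comm]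
    · simp
  | succ t ih =>
    rw [avoidProb_succ']
    have hpush : ∀ S : Finset V, (if x ∈ S then 0 else G.coverDist r (t + 1) (w, S)) =
        ∑ q : V × Finset V, if x ∈ S then 0 else
          (if S = insert w q.2 then G.step q.1 w else 0) * G.coverDist r t q := fun S => by
      split_ifs <;> simp [coverDist]
    simp_rw [hpush]
    rw [sum_comm]
    have hcollapse : ∀ q : V × Finset V, (∑ S : Finset V, if x ∈ S then 0 else
          (if S = insert w q.2 then G.step q.1 w else 0) * G.coverDist r t q) =
        if x ∈ insert w q.2 then 0 else G.step q.1 w * G.coverDist r t q := fun q => by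
      rw [sum_eq_single (insert w q.2) fun S _ hS => by simp [hS]] <;> simp
    simp_rw [hcollapse]
    split_ifs with hw
    · simp [hw]
    rw [Fintype.sum_prod_type]
    refine sum_congr rfl fun v _ => ?_
    rw [← ih, sum_mul]
    refine sum_congr rfl fun S _ => ?_
    by_cases hx : x ∈ S <;> simp [hx, Ne.symm hw, mul_comm]

lemma mem_of_coverDist_ne_zero (r : V) {t : ℕ} {p : V × Finset V}
    (hp : G.coverDist r t p ≠ 0) : r ∈ p.2 := by
  induction t generalizing p with
  | zero =>
    by_cases h : p = (r, {r})
    · simp [h]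
    · simp [coverDist, h] at hp
  | succ t ih =>
    obtain ⟨q, -, hq⟩ := exists_ne_zero_of_sum_ne_zero hp
    by_cases h : p.2 = insert p.1 q.2
    · rw [h]
      exact mem_insert_of_mem (ih (right_ne_zero_of_mul hq))
    · simp [h] at hq

lemma notHitProb_eq_sum_coverDist (r x : V) (t : ℕ) :
    G.notHitProb x t r = ∑ p : V × Finset V, if x ∈ p.2 then 0 else G.coverDist r t p := by
  rw [notHitProb, Fintype.sum_prod_type]
  exact sum_congr rfl fun w _ => (G.sum_coverDist_of_notMem r x t w).symm

lemma coverCost_summand_eq (r : V) (t : ℕ) :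
    (∑ p : V × Finset V, if p.2 ≠ univ then
        G.coverDist r t p * (1 - ((p.2.erase r).card : ℝ) / ((Fintype.card V : ℝ) - 1))
      else 0) =
      ((Fintype.card V : ℝ) - 1)⁻¹ * ∑ x, G.notHitProb x t r := by
  have hsummand : ∀ p : V × Finset V, (if p.2 ≠ univ then
        G.coverDist r t p * (1 - ((p.2.erase r).card : ℝ) / ((Fintype.card V : ℝ) - 1))
      else 0) =
      ((Fintype.card V : ℝ) - 1)⁻¹ * ∑ x, if x ∈ p.2 then 0 else G.coverDist r t p := by
    intro p
    by_cases hp : G.coverDist r t p = 0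
    · simp [hp]
    have hcompl : (∑ x, if x ∈ p.2 then 0 else G.coverDist r t p) =
        (p.2ᶜ.card : ℝ) * G.coverDist r t p := by
      simp [sum_ite, compl_eq_univ_sdiff, filter_not]
    rw [hcompl]
    split_ifs with hS
    · rw [one_sub_card_erase_div_eq_card_compl_div (G.mem_of_coverDist_ne_zero r hp) hS]
      ring
    · simp [not_not.mp hS]
  simp_rw [hsummand, ← mul_sum, notHitProb_eq_sum_coverDist]
  rw [sum_comm]

lemma coverCost_eq_sum_meanHitTime (r : V) (hs : ∀ x, Summable fun t => G.notHitProb x t r) :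
    G.coverCost r = ((Fintype.card V : ℝ) - 1)⁻¹ * ∑ x, G.meanHitTime x r := by
  rw [coverCost, tsum_congr (G.coverCost_summand_eq r), tsum_mul_left,
    Summable.tsum_finsetSum fun x _ => hs x]
  rfl

end SimpleGraph

section Path

variable {n : ℕ}

lemma pathG_adj {z w : Fin (n + 1)} : (pathG n).Adj z w ↔ (z : ℕ) + 1 = w ∨ (w : ℕ) + 1 = z :=
  Iff.rfl

lemma pathG_degree_le_two (z : Fin (n + 1)) : (pathG n).degree z ≤ 2 := by
  rw [← SimpleGraph.card_neighborFinset_eq_degree, ← card_map Fin.valEmbedding]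
  refine (card_le_card (t := {(z : ℕ) - 1, (z : ℕ) + 1}) fun i hi => ?_).trans card_le_two
  simp only [mem_map, SimpleGraph.mem_neighborFinset, pathG_adj, Fin.valEmbedding_apply] at hi
  simp only [mem_insert, mem_singleton]
  omega

lemma pathG_half_le_step {z w : Fin (n + 1)} (h : (pathG n).Adj z w) :
    1 / 2 ≤ (pathG n).step z w := by
  have hpos : 0 < (pathG n).degree z := (pathG n).degree_pos_iff_exists_adj z |>.mpr ⟨w, h⟩
  have hle : ((pathG n).degree z : ℝ) ≤ 2 := by exact_mod_cast pathG_degree_le_two z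
  rw [SimpleGraph.step, if_pos h, one_div]
  exact inv_anti₀ (by exact_mod_cast hpos) hle

lemma pathG_sum_step_mul (hn : 0 < n) (f : ℕ → ℝ) (z : Fin (n + 1)) :
    ∑ w, (pathG n).step z w * f w =
      if (z : ℕ) = 0 then f 1 else if (z : ℕ) = n then f (n - 1)
      else (f (z - 1) + f (z + 1)) / 2 := by
  rw [SimpleGraph.sum_step_mul, ← SimpleGraph.card_neighborFinset_eq_degree]
  split_ifs with h0 hn'
  · have : (pathG n).neighborFinset z = {⟨1, by omega⟩} := by
      ext w; simp [pathG_adj, Fin.ext_iff]; omega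
    simp [this]
  · have : (pathG n).neighborFinset z = {⟨n - 1, by omega⟩} := by
      ext w; simp [pathG_adj, Fin.ext_iff]; omega
    simp [this]
  · have : (pathG n).neighborFinset z = {⟨z - 1, by omega⟩, ⟨z + 1, by omega⟩} := by
      ext w; simp [pathG_adj, Fin.ext_iff]; omega
    have hne : (⟨z - 1, by omega⟩ : Fin (n + 1)) ≠ ⟨z + 1, by omega⟩ := by simp [Fin.ext_iff]
    rw [this, sum_pair hne, card_pair hne]
    push_cast
    ring

/-- Walking straight towards `x` for `k` steps has probability at least `2⁻ᵏ`. -/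
lemma pathG_notHitProb_le (k : ℕ) (x z : Fin (n + 1)) (hzx : (z : ℕ) ≤ x + k)
    (hxz : (x : ℕ) ≤ z + k) : (pathG n).notHitProb x k z ≤ 1 - (1 / 2) ^ k := by
  induction k generalizing z with
  | zero =>
    rw [Fin.ext (by omega : (z : ℕ) = x), SimpleGraph.notHitProb_self]
    norm_num
  | succ k ih =>
    by_cases h : z = x
    · rw [h, SimpleGraph.notHitProb_self, sub_nonneg]
      exact pow_le_one₀ (by norm_num) (by norm_num)
    have hz : (z : ℕ) ≠ x := Fin.val_ne_of_ne h
    let w : Fin (n + 1) :=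
      if hlt : (z : ℕ) < x then ⟨z + 1, by omega⟩ else ⟨z - 1, by omega⟩
    have hadj : (pathG n).Adj z w := by
      simp only [w, pathG_adj]
      split_ifs <;> dsimp only <;> omega
    have hw : (pathG n).notHitProb x k w ≤ 1 - (1 / 2) ^ k := by
      apply ih <;> simp only [w] <;> split_ifs <;> dsimp only <;> omega
    calc (pathG n).notHitProb x (k + 1) z ≤ 1 - 1 / 2 * (1 / 2) ^ k :=
          (pathG n).notHitProb_succ_le (pathG_half_le_step hadj) (by positivity) (by linarith)
      _ = 1 - (1 / 2) ^ (k + 1) := by ring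

lemma pathG_summable_notHitProb (hn : 0 < n) (x z : Fin (n + 1)) :
    Summable fun t => (pathG n).notHitProb x t z :=
  (pathG n).summable_notHitProb hn.ne' (sub_lt_self 1 (by positivity))
    (fun w => pathG_notHitProb_le n x w (by omega) (by omega)) z

def pathHitTime (n x z : ℕ) : ℝ :=
  if z ≤ x then (x : ℝ) ^ 2 - (z : ℝ) ^ 2 else ((n : ℝ) - x) ^ 2 - ((n : ℝ) - z) ^ 2

lemma pathHitTime_eq_one_add {x z : ℕ} (hx : x ≤ n) (hz : z ≤ n) (hzx : z ≠ x) :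
    pathHitTime n x z = 1 +
      if z = 0 then pathHitTime n x 1 else if z = n then pathHitTime n x (n - 1)
      else (pathHitTime n x (z - 1) + pathHitTime n x (z + 1)) / 2 := by
  unfold pathHitTime
  rcases Nat.eq_zero_or_pos z with rfl | hz0
  · split_ifs <;> first | contradiction | omega | (push_cast; ring1)
  obtain ⟨y, rfl⟩ : ∃ y, z = y + 1 := ⟨z - 1, by omega⟩
  rw [Nat.add_sub_cancel]
  rcases eq_or_ne (y + 1) n with rfl | hyn
  · rcases eq_or_lt_of_le (show x ≤ y by omega) with rfl | hxy <;>
      split_ifs <;> first | contradiction | omega | (push_cast; ring1)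
  · rcases lt_trichotomy x y with hxy | rfl | hxy <;>
      split_ifs <;> first | contradiction | omega | (push_cast; ring1)

lemma pathG_meanHitTime (hn : 0 < n) (x : Fin (n + 1)) :
    (pathG n).meanHitTime x = fun z : Fin (n + 1) => pathHitTime n x z := by
  refine SimpleGraph.meanHitTime_unique (pathG_summable_notHitProb hn x) (by simp [pathHitTime])
    fun z hz => ?_
  rw [pathG_sum_step_mul hn (pathHitTime n x)]
  exact pathHitTime_eq_one_add x.is_le z.is_le (Fin.val_ne_of_ne hz)

lemma sum_range_add_mul_sq (a b : ℝ) (m : ℕ) :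
    ∑ j ∈ range m, (a + b * j) ^ 2 =
      m * a ^ 2 + a * b * m * (m - 1) + b ^ 2 * m * (m - 1) * (2 * m - 1) / 6 := by
  induction m with
  | zero => simp
  | succ m ih => rw [sum_range_succ, ih]; push_cast; ring

lemma sum_range_pathHitTime {r : ℕ} (hr : r ≤ n) :
    ∑ x ∈ range (n + 1), pathHitTime n x r =
      (n : ℝ) * (n + 1) * (2 * n + 1) / 6 + r * ((n : ℝ) - r) := by
  obtain ⟨s, rfl⟩ := Nat.exists_eq_add_of_le hr
  have hleft : ∀ x ∈ range r, pathHitTime (r + s) x r =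
      ((r + s : ℝ) + (-1) * x) ^ 2 - (s : ℝ) ^ 2 := fun x hx => by
    rw [pathHitTime, if_neg (by simp at hx; omega)]; push_cast; ring
  have hright : ∀ j ∈ range (s + 1), pathHitTime (r + s) (r + j) r =
      ((r : ℝ) + 1 * j) ^ 2 - (r : ℝ) ^ 2 := fun j _ => by
    rw [pathHitTime, if_pos (by omega)]; push_cast; ring
  rw [add_assoc, sum_range_add, sum_congr rfl hleft, sum_congr rfl hright, sum_sub_distrib,
    sum_sub_distrib, sum_range_add_mul_sq, sum_range_add_mul_sq]
  simp only [sum_const, card_range, nsmul_eq_mul]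
  push_cast
  ring

end Path

/-- The cover cost of the path: `cc_r(P_n) = (n+1)(2n+1)/6 + r(n-r)/n`. -/
theorem path_coverCost (n : ℕ) (hn : 0 < n) (r : Fin (n+1)) :
    (pathG n).coverCost r =
      ((n : ℝ) + 1) * (2 * (n : ℝ) + 1) / 6
        + ((r : ℕ) : ℝ) * ((n : ℝ) - ((r : ℕ) : ℝ)) / (n : ℝ) := by
  have hmean : ∀ x : Fin (n + 1), (pathG n).meanHitTime x r = pathHitTime n x r := fun x =>
    congrFun (pathG_meanHitTime hn x) r
  rw [(pathG n).coverCost_eq_sum_meanHitTime r fun x => pathG_summable_notHitProb hn x r,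
    Fintype.card_fin, Nat.cast_add_one, add_sub_cancel_right, sum_congr rfl fun x _ => hmean x,
    Fin.sum_univ_eq_sum_range (fun x => pathHitTime n x r), sum_range_pathHitTime r.is_le]
  have hn' : (n : ℝ) ≠ 0 := by positivity
  field_simp
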